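/- For a convex body K in ℝ^n, the normalized difference body (1/D(K))·(K − K) is in Löwner position if and only if conv(D_K), the convex hull of the set of diametrical directions of K, is in Löwner position. -/

import Mathlib

open MeasureTheory Metric Set Pointwise
open scoped RealInnerProductSpace

/-- A convex body: a compact convex set with nonempty interior. -/
def IsConvexBody {n : ℕ} (K : Set (EuclideanSpace ℝ (Fin n))) : Prop :=
  IsCompact K ∧ Convex ℝ K ∧ (interior K).Nonempty


/-- `K` is in Löwner position if `K ⊆ B₂ⁿ` and every ellipsoid (affine image of the unit
ball) containing `K` has volume at least that of the unit ball. -/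
def InLownerPosition {n : ℕ} (K : Set (EuclideanSpace ℝ (Fin n))) : Prop :=
  K ⊆ closedBall 0 1 ∧
  ∀ (A : EuclideanSpace ℝ (Fin n) ≃ₗ[ℝ] EuclideanSpace ℝ (Fin n)) (t : EuclideanSpace ℝ (Fin n)),
    K ⊆ (fun x => A x + t) '' closedBall 0 1 →
    volume (closedBall (0 : EuclideanSpace ℝ (Fin n)) 1) ≤
      volume ((fun x => A x + t) '' closedBall 0 1)

/-- The set of diametrical directions of `K`: unit vectors `u` such that some segment
`x + D(K)·[0,u]` is contained in `K`. -/
def diamDirs {n : ℕ} (K : Set (EuclideanSpace ℝ (Fin n))) :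
    Set (EuclideanSpace ℝ (Fin n)) :=
  {u | ‖u‖ = 1 ∧ ∃ x ∈ K, ∀ t ∈ Icc (0:ℝ) 1, x + (t * Metric.diam K) • u ∈ K}


/-!
Write `L = D(K)⁻¹ • (K - K)`. It is a compact, convex, centrally symmetric subset of the unit
ball containing `D_K`, and its points on the unit sphere are exactly the diametrical directions.
Hence every ellipsoid containing `L` contains `conv D_K`, which gives one implication.

For the other, a centrally symmetric set lying in an ellipsoid also lies in the centred ellipsoid
with the same axes, so it suffices that, when `L` is in Löwner position, no centred ellipsoid
`{‖M x‖ ≤ 1}` with `|det M| > 1` contains the contact points `L ∩ S^{n-1}`. If one did, then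
after shrinking `M` slightly the quadratic form `(1 - t)‖x‖² + t‖M x‖²` is at most `1` on `L` for
small `t > 0` by compactness, and the ellipsoid it defines has volume
`det((1 - t) I + t MᵀM)^{-1/2} ≤ |det M|^{-t} < 1` times that of the ball, by log-concavity of
the determinant.
-/

open Matrix Topology
open scoped MatrixOrder

theorem MeasureTheory.Measure.addHaar_image_linearEquiv_add {E : Type*} [NormedAddCommGroup E]
    [NormedSpace ℝ E] [MeasurableSpace E] [BorelSpace E] [FiniteDimensional ℝ E]
    (μ : Measure E) [μ.IsAddHaarMeasure] (A : E ≃ₗ[ℝ] E) (t : E) (s : Set E) :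
    μ ((fun x => A x + t) '' s) = ENNReal.ofReal |LinearMap.det (A : E →ₗ[ℝ] E)| * μ s := by
  rw [← image_image (· + t) A, image_add_right, measure_preimage_add_right]
  exact Measure.addHaar_image_linearMap μ (A : E →ₗ[ℝ] E) s

theorem IsCompact.exists_one_sub_mul_add_mul_le_one {X : Type*} [TopologicalSpace X] {L : Set X}
    (hL : IsCompact L) {f g : X → ℝ} (hf : Continuous f) (hg : Continuous g)
    (hgL : ∀ x ∈ L, g x ≤ 1) (hfg : ∀ x ∈ L, g x = 1 → f x < 1) :
    ∃ t : ℝ, 0 < t ∧ t ≤ 1 ∧ ∀ x ∈ L, (1 - t) * g x + t * f x ≤ 1 := by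
  -- Where `f ≤ 1` every convex combination is `≤ 1`; on the compact rest `g` stays below `1 - ε`.
  have hL' : IsCompact (L ∩ f ⁻¹' Ici 1) := hL.inter_right (isClosed_Ici.preimage hf)
  obtain ⟨ε, hε, hεL'⟩ := hL'.exists_forall_le' (continuous_const.sub hg).continuousOn
    fun x ⟨hxL, hfx⟩ => sub_pos.2 <| (hgL x hxL).lt_of_ne fun h => (hfg x hxL h).not_ge hfx
  obtain ⟨C, hC⟩ := hL.bddAbove_image (hf.sub hg).continuousOn
  set B := max C 1
  have hB : 0 < B := lt_max_of_lt_right one_pos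
  refine ⟨min 1 (ε / B), by positivity, min_le_left _ _, fun x hx => ?_⟩
  have ht0 : 0 ≤ min 1 (ε / B) := by positivity
  rcases le_or_gt (f x) 1 with hfx | hfx
  · nlinarith [hgL x hx, min_le_left 1 (ε / B)]
  · have hgx : ε ≤ 1 - g x := hεL' x ⟨hx, hfx.le⟩
    have hfgx : f x - g x ≤ B := (hC (mem_image_of_mem _ hx)).trans (le_max_left _ _)
    have htB : min 1 (ε / B) * B ≤ ε := by
      calc min 1 (ε / B) * B ≤ ε / B * B := by gcongr; exact min_le_right _ _
        _ = ε := div_mul_cancel₀ ε hB.ne'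
    nlinarith

namespace Matrix

variable {ι : Type*} [Fintype ι] [DecidableEq ι]

theorem IsHermitian.det_smul_one_add_smul {S : Matrix ι ι ℝ} (hS : S.IsHermitian) (a b : ℝ) :
    (a • 1 + b • S).det = ∏ i, (a + b * hS.eigenvalues i) := by
  set D : Matrix ι ι ℝ := diagonal (RCLike.ofReal ∘ hS.eigenvalues)
  have hD : a • 1 + b • D = diagonal fun i => a + b * hS.eigenvalues i := by
    ext i j
    by_cases h : i = j <;> simp [D, h]
  calc (a • 1 + b • S).det
      = (Unitary.conjStarAlgAut ℝ _ hS.eigenvectorUnitary (a • 1 + b • D)).det := by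
        rw [map_add, map_smul, map_smul, map_one, ← hS.spectral_theorem]
    _ = ∏ i, (a + b * hS.eigenvalues i) := by rw [det_map, hD, det_diagonal]

theorem PosSemidef.det_rpow_le_det_one_sub_smul_add_smul {S : Matrix ι ι ℝ} (hS : S.PosSemidef)
    {t : ℝ} (ht0 : 0 ≤ t) (ht1 : t ≤ 1) : S.det ^ t ≤ ((1 - t) • 1 + t • S).det := by
  simp only [hS.isHermitian.det_smul_one_add_smul, hS.isHermitian.det_eq_prod_eigenvalues,
    RCLike.ofReal_real_eq_id, id_eq]
  rw [← Real.finsetProd_rpow _ _ fun i _ => hS.eigenvalues_nonneg i]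
  refine Finset.prod_le_prod (fun i _ => Real.rpow_nonneg (hS.eigenvalues_nonneg i) t) fun i _ => ?_
  simpa using Real.geom_mean_le_arith_mean2_weighted (sub_nonneg.2 ht1) ht0 zero_le_one
    (hS.eigenvalues_nonneg i) (by ring)

theorem norm_toEuclideanLin_sq (C : Matrix ι ι ℝ) (x : EuclideanSpace ℝ ι) :
    ‖toEuclideanLin C x‖ ^ 2 = ⟪toEuclideanLin (Cᴴ * C) x, x⟫ := by
  rw [← real_inner_self_eq_norm_sq, toLpLin_mul_same, LinearMap.comp_apply,
    toEuclideanLin_conjTranspose_eq_adjoint, LinearMap.adjoint_inner_left]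

end Matrix

section Ellipsoid

variable {ι : Type*} [Fintype ι] [DecidableEq ι] {L : Set (EuclideanSpace ℝ ι)}

theorem exists_one_lt_abs_det_forall_norm_le_one_of_lt (hL : IsCompact L)
    (hLB : L ⊆ closedBall 0 1) {M : EuclideanSpace ℝ ι →ₗ[ℝ] EuclideanSpace ℝ ι}
    (hM : 1 < |LinearMap.det M|) (hML : ∀ x ∈ L, ‖x‖ = 1 → ‖M x‖ < 1) :
    ∃ C : EuclideanSpace ℝ ι →ₗ[ℝ] EuclideanSpace ℝ ι,
      1 < |LinearMap.det C| ∧ ∀ x ∈ L, ‖C x‖ ≤ 1 := by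
  obtain ⟨M, rfl⟩ := toEuclideanLin.surjective M
  rw [LinearMap.det_toLpLin] at hM
  obtain ⟨t, ht0, ht1, htL⟩ := hL.exists_one_sub_mul_add_mul_le_one
    (f := fun x => ‖toEuclideanLin M x‖ ^ 2) (g := fun x => ‖x‖ ^ 2) (by fun_prop) (by fun_prop)
    (fun x hx => pow_le_one₀ (norm_nonneg x) (mem_closedBall_zero_iff.1 (hLB hx)))
    fun x hx hx1 => pow_lt_one₀ (norm_nonneg _)
      (hML x hx ((pow_eq_one_iff_of_nonneg (norm_nonneg x) two_ne_zero).1 hx1)) two_ne_zero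
  have hMM := posSemidef_conjTranspose_mul_self M
  have hQ : ((1 - t) • 1 + t • (Mᴴ * M)).PosSemidef :=
    (PosSemidef.one.smul (sub_nonneg.2 ht1)).add (hMM.smul ht0.le)
  obtain ⟨C, hC⟩ := CStarAlgebra.nonneg_iff_eq_star_mul_self.mp hQ.nonneg
  refine ⟨toEuclideanLin C, ?_, fun x hx => ?_⟩
  · rw [LinearMap.det_toLpLin, ← one_lt_sq_iff_one_lt_abs]
    calc 1 < (Mᴴ * M).det ^ t := by
          rw [det_mul, det_conjTranspose, star_trivial, ← sq]
          exact Real.one_lt_rpow ((one_lt_sq_iff_one_lt_abs _).2 hM) ht0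
      _ ≤ ((1 - t) • 1 + t • (Mᴴ * M)).det := hMM.det_rpow_le_det_one_sub_smul_add_smul ht0.le ht1
      _ = C.det ^ 2 := by
        rw [hC, star_eq_conjTranspose, det_mul, det_conjTranspose, star_trivial, sq]
  · have hCx : ‖toEuclideanLin C x‖ ^ 2 = (1 - t) * ‖x‖ ^ 2 + t * ‖toEuclideanLin M x‖ ^ 2 := by
      rw [norm_toEuclideanLin_sq, ← star_eq_conjTranspose, ← hC, norm_toEuclideanLin_sq M]
      simp [inner_add_left, inner_smul_left]
    exact (sq_le_one_iff₀ (norm_nonneg _)).1 (hCx ▸ htL x hx)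

theorem exists_one_lt_abs_det_forall_norm_le_one (hL : IsCompact L)
    (hLB : L ⊆ closedBall 0 1) {M : EuclideanSpace ℝ ι →ₗ[ℝ] EuclideanSpace ℝ ι}
    (hM : 1 < |LinearMap.det M|) (hML : ∀ x ∈ L, ‖x‖ = 1 → ‖M x‖ ≤ 1) :
    ∃ C : EuclideanSpace ℝ ι →ₗ[ℝ] EuclideanSpace ℝ ι,
      1 < |LinearMap.det C| ∧ ∀ x ∈ L, ‖C x‖ ≤ 1 := by
  obtain ⟨c, hcM, hc1⟩ : ∃ c : ℝ, c ^ Fintype.card ι < |LinearMap.det M| ∧ 1 < c :=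
    ((((continuous_pow _).tendsto' 1 1 (one_pow _)).eventually (gt_mem_nhds hM)).filter_mono
      nhdsWithin_le_nhds |>.and self_mem_nhdsWithin).exists (f := 𝓝[>] (1 : ℝ))
  have hc0 : 0 < c := one_pos.trans hc1
  refine exists_one_lt_abs_det_forall_norm_le_one_of_lt hL hLB (M := c⁻¹ • M) ?_ fun x hx hx1 => ?_
  · rw [LinearMap.det_smul, finrank_euclideanSpace, abs_mul, abs_pow, abs_inv, abs_of_pos hc0,
      inv_pow, inv_mul_eq_div, one_lt_div (by positivity)]
    exact hcM
  · rw [LinearMap.smul_apply, norm_smul, Real.norm_eq_abs, abs_inv, abs_of_pos hc0]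
    calc c⁻¹ * ‖M x‖ ≤ c⁻¹ := mul_le_of_le_one_right (by positivity) (hML x hx hx1)
      _ < 1 := inv_lt_one_of_one_lt₀ hc1

end Ellipsoid

theorem subset_image_closedBall_of_neg_mem {E : Type*} [NormedAddCommGroup E] [NormedSpace ℝ E]
    {S : Set E} (hS : ∀ u ∈ S, -u ∈ S) (A : E ≃ₗ[ℝ] E) (t : E)
    (hSA : S ⊆ (fun x => A x + t) '' closedBall 0 1) : S ⊆ A '' closedBall 0 1 := by
  intro u hu
  obtain ⟨y, hy, hyu⟩ := hSA hu
  obtain ⟨z, hz, hzu⟩ := hSA (hS u hu)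
  refine ⟨(2 : ℝ)⁻¹ • (y - z), ?_, ?_⟩
  · rw [mem_closedBall_zero_iff, norm_smul, Real.norm_eq_abs, abs_of_pos (by norm_num)]
    have := norm_sub_le y z
    have := mem_closedBall_zero_iff.1 hy
    have := mem_closedBall_zero_iff.1 hz
    linarith
  · simp only [map_smul, map_sub]
    rw [show A y = u - t from eq_sub_of_add_eq hyu, show A z = -u - t from eq_sub_of_add_eq hzu]
    module

section Lowner

variable {n : ℕ}

local notation "E" => EuclideanSpace ℝ (Fin n)

theorem inLownerPosition_iff {L : Set E} :
    InLownerPosition L ↔ L ⊆ closedBall 0 1 ∧ ∀ (A : E ≃ₗ[ℝ] E) (t : E),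
      L ⊆ (fun x => A x + t) '' closedBall 0 1 → 1 ≤ |LinearMap.det (A : E →ₗ[ℝ] E)| := by
  have h0 := (measure_closedBall_pos volume (0 : E) one_pos).ne'
  have htop := (measure_closedBall_lt_top (μ := volume) (x := (0 : E)) (r := 1)).ne
  refine and_congr_right' <| forall₂_congr fun A t => imp_congr_right fun _ => ?_
  rw [Measure.addHaar_image_linearEquiv_add, ← ENNReal.one_le_ofReal]
  conv_rhs => rw [← ENNReal.mul_le_mul_iff_left h0 htop, one_mul]

theorem inLownerPosition_of_subsingleton [Subsingleton E] (L : Set E) : InLownerPosition L := by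
  refine inLownerPosition_iff.2 ⟨fun x _ => ?_, fun A _ _ => ?_⟩
  · simp [Subsingleton.elim x 0]
  · simp [LinearMap.det_eq_one_of_subsingleton]

theorem InLownerPosition.of_subset {S L : Set E} (hS : InLownerPosition S) (hSL : S ⊆ L)
    (hL : L ⊆ closedBall 0 1) : InLownerPosition L :=
  ⟨hL, fun A t hA => hS.2 A t (hSL.trans hA)⟩

theorem InLownerPosition.one_le_abs_det_of_inter_sphere_subset {L : Set E}
    (hL : InLownerPosition L) (hLc : IsCompact L) (A : E ≃ₗ[ℝ] E)
    (hA : L ∩ sphere 0 1 ⊆ A '' closedBall 0 1) :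
    1 ≤ |LinearMap.det (A : E →ₗ[ℝ] E)| := by
  by_contra! hA1
  have hA' : 1 < |LinearMap.det (A.symm : E →ₗ[ℝ] E)| := by
    rw [LinearEquiv.det_coe_symm, abs_inv]
    exact one_lt_inv_iff₀.2 ⟨abs_pos.2 (LinearEquiv.isUnit_det' A).ne_zero, hA1⟩
  obtain ⟨C, hC, hCL⟩ := exists_one_lt_abs_det_forall_norm_le_one hLc hL.1 hA' fun x hx hx1 => by
    obtain ⟨y, hy, rfl⟩ := hA ⟨hx, mem_sphere_zero_iff_norm.2 hx1⟩
    simpa using hy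
  let e := LinearMap.equivOfDetNeZero C (abs_pos.1 (one_pos.trans hC))
  have he := (inLownerPosition_iff.1 hL).2 e.symm 0
    fun x hx => ⟨e x, mem_closedBall_zero_iff.2 (hCL x hx), by simp⟩
  rw [LinearEquiv.det_coe_symm, abs_inv] at he
  exact (inv_lt_one_of_one_lt₀ hC).not_ge he

end Lowner

section DifferenceBody

variable {n : ℕ} {K : Set (EuclideanSpace ℝ (Fin n))}

theorem inv_diam_smul_sub_subset_closedBall (hK : Bornology.IsBounded K) :
    (diam K)⁻¹ • (K - K) ⊆ closedBall 0 1 := by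
  rintro _ ⟨_, ⟨a, ha, b, hb, rfl⟩, rfl⟩
  rw [mem_closedBall_zero_iff, norm_smul, norm_inv, Real.norm_of_nonneg diam_nonneg,
    ← dist_eq_norm]
  exact inv_mul_le_one_of_le₀ (dist_le_diam_of_mem hK ha hb) diam_nonneg

theorem neg_mem_diamDirs {u : EuclideanSpace ℝ (Fin n)} (hu : u ∈ diamDirs K) :
    -u ∈ diamDirs K := by
  obtain ⟨hu1, x, hx, hseg⟩ := hu
  refine ⟨by rw [norm_neg, hu1], x + (1 * diam K) • u, hseg 1 ⟨zero_le_one, le_rfl⟩,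
    fun s hs => ?_⟩
  convert hseg (1 - s) ⟨by linarith [hs.2], by linarith [hs.1]⟩ using 1
  module

theorem diamDirs_subset_inv_diam_smul_sub (hD : diam K ≠ 0) :
    diamDirs K ⊆ (diam K)⁻¹ • (K - K) := by
  rintro u ⟨-, x, hx, hseg⟩
  refine ⟨(x + (1 * diam K) • u) - x, sub_mem_sub (hseg 1 ⟨zero_le_one, le_rfl⟩) hx, ?_⟩
  simp [smul_smul, inv_mul_cancel₀ hD]

theorem inv_diam_smul_sub_inter_sphere_subset_diamDirs (hK : Convex ℝ K) :
    (diam K)⁻¹ • (K - K) ∩ sphere 0 1 ⊆ diamDirs K := by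
  rintro _ ⟨⟨_, ⟨a, ha, b, hb, rfl⟩, rfl⟩, hu1⟩
  rw [mem_sphere_zero_iff_norm] at hu1
  have hD : diam K ≠ 0 := by rintro hD; simp [hD] at hu1
  refine ⟨hu1, b, hb, fun s hs => ?_⟩
  convert hK.add_smul_sub_mem hb ha hs using 1
  simp [smul_smul, mul_assoc, mul_inv_cancel₀ hD]

end DifferenceBody

/-- The normalized difference body `(1/D(K))·(K - K)` is in Löwner position iff the
convex hull of the set of diametrical directions of `K` is in Löwner position. -/
theorem normalized_difference_lowner_iff_diamDirs_hull_lowner {n : ℕ}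
    (K : Set (EuclideanSpace ℝ (Fin n))) (hK : IsConvexBody K) :
    InLownerPosition ((Metric.diam K)⁻¹ • (K - K)) ↔
      InLownerPosition (convexHull ℝ (diamDirs K)) := by
  rcases subsingleton_or_nontrivial (EuclideanSpace ℝ (Fin n)) with hE | hE
  · exact iff_of_true (inLownerPosition_of_subsingleton _) (inLownerPosition_of_subsingleton _)
  obtain ⟨hKc, hKconv, x, hx⟩ := hK
  have hD : diam K ≠ 0 := (diam_pos (infinite_of_mem_nhds x
    (mem_interior_iff_mem_nhds.1 hx)).nontrivial hKc.isBounded).ne'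
  have hLc : IsCompact ((diam K)⁻¹ • (K - K)) := by
    rw [sub_eq_add_neg]
    exact (hKc.add hKc.neg).smul _
  constructor
  · intro hL
    refine inLownerPosition_iff.2 ⟨convexHull_min (fun u hu => mem_closedBall_zero_iff.2 hu.1.le)
      (convex_closedBall 0 1), fun A t hA => hL.one_le_abs_det_of_inter_sphere_subset hLc A ?_⟩
    exact (inv_diam_smul_sub_inter_sphere_subset_diamDirs hKconv).trans <|
      subset_image_closedBall_of_neg_mem (fun _ => neg_mem_diamDirs) A t
        ((subset_convexHull ℝ _).trans hA)
  · exact fun h => h.of_subset (convexHull_min (diamDirs_subset_inv_diam_smul_sub hD)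
      ((hKconv.sub hKconv).smul _)) (inv_diam_smul_sub_subset_closedBall hKc.isBounded)
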